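/- Let (X,d) be a metric space. The following statements are equivalent: (1) X is Bourbaki quasi-complete; (2) every subsequence of every quasi-Cauchy sequence in X has a cluster point in X; (3) every continuous function f : X → ℝ is ward continuous. -/

import Mathlib

open Filter Metric Set

/-- A sequence is quasi-Cauchy if distances of consecutive terms tend to zero. -/
def QuasiCauchy {α : Type*} [MetricSpace α] (u : ℕ → α) : Prop :=
  ∀ ε > (0:ℝ), ∃ n₀ : ℕ, ∀ n ≥ n₀, dist (u (n+1)) (u n) < ε

/-- A function is ward continuous if it preserves quasi-Cauchy sequences. -/
def WardContinuous {α β : Type*} [MetricSpace α] [MetricSpace β] (f : α → β) : Prop :=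
  ∀ u : ℕ → α, QuasiCauchy u → QuasiCauchy (f ∘ u)

/-- `y` lies in the ε-chainable component of `x`: they are joined by an ε-chain. -/
def ChainConn {α : Type*} [MetricSpace α] (ε : ℝ) (x y : α) : Prop :=
  ∃ (n : ℕ) (p : ℕ → α), p 0 = x ∧ p n = y ∧ ∀ i < n, dist (p i) (p (i+1)) < ε

/-- A sequence is Bourbaki quasi-Cauchy if for each ε > 0 it is eventually in one
ε-chainable component. -/
def BourbakiQuasiCauchy {α : Type*} [MetricSpace α] (u : ℕ → α) : Prop :=
  ∀ ε > (0:ℝ), ∃ (p : α) (n₀ : ℕ), ∀ n ≥ n₀, ChainConn ε p (u n)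

/-- A metric space is Bourbaki quasi-complete: every Bourbaki quasi-Cauchy sequence
has a cluster point. -/
def BourbakiQuasiComplete (α : Type*) [MetricSpace α] : Prop :=
  ∀ u : ℕ → α, BourbakiQuasiCauchy u → ∃ c : α, MapClusterPt c atTop u

section Aux
variable {X : Type*} [MetricSpace X]

variable {X : Type*} [MetricSpace X]

lemma chainConn_symm {ε : ℝ} {x y : X} (h : ChainConn ε x y) : ChainConn ε y x := by
  obtain ⟨n, p, h0, hn, hs⟩ := h
  refine ⟨n, fun i => p (n - i), by simp [hn], by simp [h0], ?_⟩
  intro i hi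
  have he : n - i = (n - (i+1)) + 1 := by omega
  simp only [he, dist_comm]
  exact hs _ (by omega)

lemma chainConn_trans {ε : ℝ} {x y z : X} (h1 : ChainConn ε x y) (h2 : ChainConn ε y z) :
    ChainConn ε x z := by
  obtain ⟨n, p, hp0, hpn, hps⟩ := h1
  obtain ⟨m, q, hq0, hqm, hqs⟩ := h2
  refine ⟨n + m, fun i => if i < n then p i else q (i - n), ?_, ?_, ?_⟩
  · by_cases h : 0 < n
    · simp [h, hp0]
    · have hn0 : n = 0 := by omega
      subst hn0
      simpa [hq0, ← hpn] using hp0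
  · have : ¬ (n + m < n) := by omega
    simp [this, hqm]
  · intro i hi
    by_cases h1' : i + 1 < n
    · have : i < n := by omega
      simp only [if_pos h1', if_pos this]
      exact hps i this
    · by_cases h2' : i < n
      · have hin : i + 1 = n := by omega
        have e1 : q (i + 1 - n) = p (i+1) := by
          rw [hin, Nat.sub_self, hq0, ← hpn]
        simp only [if_pos h2', if_neg h1', e1]
        exact hps i h2'
      · simp only [if_neg h1', if_neg h2']
        have : i + 1 - n = (i - n) + 1 := by omega
        rw [this]
        exact hqs _ (by omega)

lemma chain_head {ε : ℝ} : ∀ (n : ℕ) (p : ℕ → X) (x y : X), p 0 = x → p n = y →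
    (∀ i < n, dist (p i) (p (i+1)) < ε) → x ≠ y →
    ∃ z, z ≠ x ∧ dist x z < ε ∧ ChainConn ε z y := by
  intro n
  induction n with
  | zero => intro p x y h0 hn _ hxy; exact absurd (h0 ▸ hn) hxy
  | succ n ih =>
    intro p x y h0 hn hs hxy
    by_cases h1 : p 1 = x
    · exact ih (fun i => p (i+1)) x y h1 hn (fun i hi => hs (i+1) (by omega)) hxy
    · refine ⟨p 1, h1, ?_, ⟨n, fun i => p (i+1), rfl, hn, fun i hi => hs (i+1) (by omega)⟩⟩
      rw [← h0]; exact hs 0 (by omega)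

lemma chain_head' {ε : ℝ} {x y : X} (h : ChainConn ε x y) (hxy : x ≠ y) :
    ∃ z, z ≠ x ∧ dist x z < ε ∧ ChainConn ε z y := by
  obtain ⟨n, p, h0, hn, hs⟩ := h
  exact chain_head n p x y h0 hn hs hxy

lemma exists_pos_min (K : ℕ) (g : ℕ → ℝ) (h : ∀ i < K, 0 < g i) :
    ∃ δ > (0:ℝ), ∀ i < K, δ ≤ g i := by
  induction K with
  | zero => exact ⟨1, one_pos, fun i hi => absurd hi (by omega)⟩
  | succ K ih =>
    obtain ⟨δ, hδ, hle⟩ := ih (fun i hi => h i (by omega))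
    refine ⟨min δ (g K), lt_min hδ (h K (by omega)), fun i hi => ?_⟩
    rcases Nat.lt_succ_iff_lt_or_eq.mp hi with h' | h'
    · exact le_trans (min_le_left _ _) (hle i h')
    · subst h'; exact min_le_right _ _
open Filter Metric Set
variable {X : Type*} [MetricSpace X]

lemma no_cluster_sep {u : ℕ → X} (hno : ∀ c, ¬ MapClusterPt c atTop u) (c : X) :
    ∃ ε > (0:ℝ), ∃ N : ℕ, ∀ n ≥ N, ε ≤ dist (u n) c := by
  have h := hno c
  rw [mapClusterPt_iff_frequently] at h
  push_neg at h
  obtain ⟨s, hs, hev⟩ := h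
  obtain ⟨ε, hε, hball⟩ := Metric.mem_nhds_iff.mp hs
  obtain ⟨N, hN⟩ := eventually_atTop.mp hev
  refine ⟨ε, hε, N, fun n hn => ?_⟩
  by_contra hlt
  push_neg at hlt
  exact hN n hn (hball (mem_ball.mpr hlt))

lemma fib_finite {u : ℕ → X} (hno : ∀ c, ¬ MapClusterPt c atTop u) (c : X) :
    {n | u n = c}.Finite := by
  obtain ⟨ε, hε, N, hN⟩ := no_cluster_sep hno c
  apply (Set.finite_Iio N).subset
  intro n hn
  simp only [mem_setOf_eq] at hn
  by_contra h
  simp only [mem_Iio, not_lt] at h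
  have := hN n h
  rw [hn, dist_self] at this
  linarith

lemma exists_next {u : ℕ → X} (hno : ∀ c, ¬ MapClusterPt c atTop u) (b : ℕ) (F : Finset X) :
    ∃ n, b ≤ n ∧ u n ∉ F := by
  have hfin : {n | u n ∈ F}.Finite := by
    have he : {n | u n ∈ F} = ⋃ c ∈ (F : Set X), {n | u n = c} := by ext n; simp
    rw [he]
    exact Set.Finite.biUnion F.finite_toSet (fun c _ => fib_finite hno c)
  by_contra h
  push_neg at h
  exact (Set.Ici_infinite b) (hfin.subset (fun n hn => h n hn))

lemma exists_m {u : ℕ → X} (hno : ∀ c, ¬ MapClusterPt c atTop u) (N : ℕ → ℕ) :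
    ∃ m : ℕ → ℕ, (∀ k, m k < m (k+1)) ∧ (∀ k, N k ≤ m k) ∧
      Function.Injective (fun k => u (m k)) := by
  classical
  have hex := exists_next hno (u := u)
  let pick : ℕ → Finset X → ℕ := fun b F => (hex b F).choose
  have hpick : ∀ b F, b ≤ pick b F ∧ u (pick b F) ∉ F := fun b F => (hex b F).choose_spec
  let g : ℕ → ℕ × Finset X := fun k => Nat.rec
    (⟨pick (N 0) ∅, {u (pick (N 0) ∅)}⟩)
    (fun k' st => ⟨pick (max (N (k'+1)) (st.1+1)) st.2,
      insert (u (pick (max (N (k'+1)) (st.1+1)) st.2)) st.2⟩) k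
  refine ⟨fun k => (g k).1, ?_, ?_, ?_⟩
  case _ =>
    intro k
    have h := (hpick (max (N (k+1)) ((g k).1+1)) (g k).2).1
    have he : (g (k+1)).1 = pick (max (N (k+1)) ((g k).1+1)) (g k).2 := rfl
    show (g k).1 < (g (k+1)).1
    rw [he]
    omega
  case _ =>
    intro k
    cases k with
    | zero => exact (hpick (N 0) ∅).1
    | succ k =>
      have h := (hpick (max (N (k+1)) ((g k).1+1)) (g k).2).1
      have he : (g (k+1)).1 = pick (max (N (k+1)) ((g k).1+1)) (g k).2 := rfl
      show N (k+1) ≤ (g (k+1)).1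
      rw [he]
      omega
  case _ =>
    have hmem : ∀ k, u ((g k).1) ∈ (g k).2 := by
      intro k
      cases k with
      | zero => exact Finset.mem_singleton_self _
      | succ k => exact Finset.mem_insert_self _ _
    have hsub : ∀ i k, i ≤ k → (g i).2 ⊆ (g k).2 := by
      intro i k hik
      induction k with
      | zero => have : i = 0 := by omega
                subst this; exact subset_rfl
      | succ k ih =>
        rcases Nat.lt_succ_iff_lt_or_eq.mp (Nat.lt_succ_of_le hik) with h | h
        · exact (ih (by omega)).trans (Finset.subset_insert _ _)
        · subst h; exact subset_rfl
    have hnotin : ∀ k, u ((g (k+1)).1) ∉ (g k).2 :=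
      fun k => (hpick (max (N (k+1)) ((g k).1+1)) (g k).2).2
    have key : ∀ i j, i < j → u ((g i).1) ≠ u ((g j).1) := by
      intro i j hij he
      obtain ⟨j', rfl⟩ : ∃ j', j = j' + 1 := ⟨j-1, by omega⟩
      exact hnotin j' (he ▸ hsub i j' (by omega) (hmem i))
    intro i j h
    by_contra hne
    rcases lt_trichotomy i j with h'|h'|h'
    · exact key i j h' h
    · exact hne h'
    · exact key j i h' h.symm
open Filter Metric Set
variable {X : Type*} [MetricSpace X]

lemma eps_mono {K k : ℕ} (h : K ≤ k) : 1/((k:ℝ)+1) ≤ 1/((K:ℝ)+1) := by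
  apply one_div_le_one_div_of_le
  · positivity
  · have : (K:ℝ) ≤ k := Nat.cast_le.mpr h
    linarith

lemma eps_pos (k : ℕ) : (0:ℝ) < 1/((k:ℝ)+1) := by positivity

lemma exists_eps_le {ε : ℝ} (hε : 0 < ε) : ∃ K : ℕ, ∀ k ≥ K, 1/((k:ℝ)+1) ≤ ε := by
  obtain ⟨K, hK⟩ := exists_nat_one_div_lt hε
  exact ⟨K, fun k hk => le_trans (eps_mono hk) hK.le⟩

lemma exists_radii {u : ℕ → X} (hno : ∀ c, ¬ MapClusterPt c atTop u)
    (m : ℕ → ℕ) (hm : ∀ k, k ≤ m k) (x z : ℕ → X) (hx : ∀ k, x k = u (m k))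
    (hinj : Function.Injective x)
    (hz : ∀ k, dist (x k) (z k) < 1/((k:ℝ)+1)) (j : ℕ) :
    ∃ r, 0 < r ∧ r ≤ 1/((j:ℝ)+1) ∧ (∀ i, i ≠ j → r ≤ dist (x j) (x i)) ∧
      (∀ k, z k ≠ x j → r ≤ dist (x j) (z k)) := by
  classical
  obtain ⟨ε, hε, Nc, hNc⟩ := no_cluster_sep hno (x j)
  obtain ⟨K2, hK2⟩ := exists_eps_le (by linarith : (0:ℝ) < ε/2)
  set K := max Nc K2 with hK
  have ha : ∀ i, K ≤ i → ε ≤ dist (x j) (x i) := by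
    intro i hi
    rw [dist_comm, hx i]
    exact hNc (m i) (le_trans (le_trans (le_max_left _ _) hi) (hm i))
  have hb : ∀ k, K ≤ k → ε/2 ≤ dist (x j) (z k) := by
    intro k hk
    have h1 := ha k hk
    have h2 := hz k
    have h3 : 1/((k:ℝ)+1) ≤ ε/2 := hK2 k (le_trans (le_max_right _ _) hk)
    have := dist_triangle (x j) (z k) (x k)
    rw [dist_comm (z k) (x k)] at this
    linarith
  obtain ⟨δ₁, hδ₁, hδ₁le⟩ := exists_pos_min K (fun i => if i = j then 1 else dist (x j) (x i))
    (by intro i _; split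
        · exact one_pos
        · exact dist_pos.mpr (fun he => ‹¬ _› (hinj he.symm)))
  obtain ⟨δ₂, hδ₂, hδ₂le⟩ := exists_pos_min K (fun k => if z k = x j then 1 else dist (x j) (z k))
    (by intro k _; split
        · exact one_pos
        · exact dist_pos.mpr (fun he => ‹¬ _› he.symm))
  refine ⟨min (min δ₁ δ₂) (min (1/((j:ℝ)+1)) (ε/2)), ?_, ?_, ?_, ?_⟩
  · simp only [lt_min_iff]
    exact ⟨⟨hδ₁, hδ₂⟩, eps_pos j, by linarith⟩
  · exact le_trans (min_le_right _ _) (min_le_left _ _)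
  · intro i hij
    rcases lt_or_ge i K with h | h
    · have := hδ₁le i h
      rw [if_neg hij] at this
      exact le_trans (le_trans (min_le_left _ _) (min_le_left _ _)) this
    · exact le_trans (le_trans (min_le_right _ _) ((min_le_right _ _).trans (by linarith [ha i h]))) le_rfl
  · intro k hzk
    rcases lt_or_ge k K with h | h
    · have := hδ₂le k h
      rw [if_neg hzk] at this
      exact le_trans (le_trans (min_le_left _ _) (min_le_right _ _)) this
    · exact le_trans (min_le_right _ _) ((min_le_right _ _).trans (hb k h))

noncomputable def fbump (x : ℕ → X) (r : ℕ → ℝ) (j : ℕ) (y : X) : ℝ :=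
  ((j:ℝ)+1) * max 0 (1 - dist y (x j) / r j)

noncomputable def ff (x : ℕ → X) (r : ℕ → ℝ) (y : X) : ℝ := ∑' j, fbump x r j y

lemma fbump_cont (x : ℕ → X) (r : ℕ → ℝ) (j : ℕ) : Continuous (fbump x r j) :=
  continuous_const.mul (continuous_const.max
    (continuous_const.sub ((continuous_id.dist continuous_const).div_const _)))

lemma fbump_self (x : ℕ → X) (r : ℕ → ℝ) (j : ℕ) (hr : 0 < r j) :
    fbump x r j (x j) = (j:ℝ)+1 := by
  simp [fbump, dist_self]

lemma fbump_zero (x : ℕ → X) (r : ℕ → ℝ) {j : ℕ} {y : X} (hr : 0 < r j)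
    (h : r j ≤ dist y (x j)) : fbump x r j y = 0 := by
  have h1 : 1 - dist y (x j) / r j ≤ 0 := by
    have : 1 ≤ dist y (x j) / r j := (one_le_div hr).mpr h
    linarith
  simp [fbump, max_eq_left h1]

lemma fbump_ne (x : ℕ → X) (r : ℕ → ℝ) {j : ℕ} {y : X} (hr : 0 < r j)
    (h : fbump x r j y ≠ 0) : dist y (x j) < r j := by
  by_contra hc
  push_neg at hc
  exact h (fbump_zero x r hr hc)

lemma ff_eval_x (x : ℕ → X) (r : ℕ → ℝ) (hr0 : ∀ j, 0 < r j)
    (hsep : ∀ j i, i ≠ j → r j ≤ dist (x j) (x i)) (k : ℕ) :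
    ff x r (x k) = (k:ℝ)+1 := by
  unfold ff
  rw [tsum_eq_sum (s := {k}) ?_, Finset.sum_singleton, fbump_self x r k (hr0 k)]
  intro j hj
  have hjk : j ≠ k := by simpa using hj
  exact fbump_zero x r (hr0 j) (by rw [dist_comm]; exact hsep j k (Ne.symm hjk))

lemma ff_eval_notin (x : ℕ → X) (r : ℕ → ℝ) {y : X}
    (h : ∀ j, fbump x r j y = 0) : ff x r y = 0 := by
  unfold ff
  rw [tsum_eq_sum (s := ∅) (fun b _ => h b), Finset.sum_empty]

lemma ff_cont (x : ℕ → X) (r : ℕ → ℝ)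
    (hloc : ∀ c : X, ∃ s > (0:ℝ), ∃ K : ℕ, ∀ y ∈ ball c s, ∀ j ≥ K, fbump x r j y = 0) :
    Continuous (ff x r) := by
  rw [continuous_iff_continuousAt]
  intro c
  obtain ⟨s, hs, K, hK⟩ := hloc c
  have hev : ff x r =ᶠ[nhds c] fun y => ∑ j ∈ Finset.range K, fbump x r j y := by
    filter_upwards [ball_mem_nhds c hs] with y hy
    exact tsum_eq_sum (fun j hj => hK y hy j (by simpa using hj))
  exact (continuous_finset_sum _ (fun j _ => fbump_cont x r j)).continuousAt.congr hev.symm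

lemma concat (x z : ℕ → X) (hz2 : ∀ k : ℕ, dist (x k) (z k) < 1/((k:ℝ)+1))
    (hz3 : ∀ k : ℕ, ChainConn (1/((k:ℝ)+1)) (z k) (x (k+1))) :
    ∃ (v : ℕ → X) (S : ℕ → ℕ), StrictMono S ∧ (∀ k, v (S k) = x k) ∧
      (∀ k, v (S k + 1) = z k) ∧ QuasiCauchy v := by
  classical
  choose L q hq0 hqL hqs using hz3
  set B : ℕ → ℕ := fun k => L k + 1 with hB
  set w : ℕ → ℕ → X := fun k i => if i = 0 then x k else q k (i-1) with hwdef
  have hw0 : ∀ k, w k 0 = x k := fun k => rfl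
  have hw1 : ∀ k, w k 1 = z k := fun k => by
    show q k 0 = z k
    exact hq0 k
  have hwB : ∀ k, w k (B k) = x (k+1) := fun k => by
    show (if L k + 1 = 0 then x k else q k (L k + 1 - 1)) = x (k+1)
    simp [hqL k]
  have hwstep : ∀ k, ∀ i < B k, dist (w k i) (w k (i+1)) < 1/((k:ℝ)+1) := by
    intro k i hi
    match i with
    | 0 =>
      rw [hw0, hw1]
      exact hz2 k
    | Nat.succ i =>
      show dist (q k (i+1-1)) (q k (i+1+1-1)) < _
      simp only [Nat.add_sub_cancel]
      have hB1 : B k = L k + 1 := rfl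
      exact hqs k i (by omega)
  set S : ℕ → ℕ := fun k => Nat.rec 0 (fun k' acc => acc + B k') k with hSdef
  have hS0 : S 0 = 0 := rfl
  have hSs : ∀ k, S (k+1) = S k + B k := fun k => rfl
  have hSmono : StrictMono S := strictMono_nat_of_lt_succ (fun k => by
    rw [hSs]; have : B k = L k + 1 := rfl
    omega)
  have hSk : ∀ k, k ≤ S k := fun k => hSmono.le_apply
  set kk : ℕ → ℕ := fun n => Nat.findGreatest (fun k => S k ≤ n) n with hkkdef
  have hk1 : ∀ n, S (kk n) ≤ n := fun n =>
    Nat.findGreatest_spec (P := fun k => S k ≤ n) (Nat.zero_le n) (Nat.zero_le n)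
  have hk2 : ∀ n, n < S (kk n + 1) := by
    intro n
    by_contra h
    push_neg at h
    exact Nat.findGreatest_is_greatest (Nat.lt_succ_self _) (le_trans (hSk _) h) h
  have hkk_ge : ∀ k n, S k ≤ n → k ≤ kk n := fun k n h =>
    Nat.le_findGreatest (le_trans (hSk k) h) h
  have hkk_le : ∀ k n, n < S (k+1) → kk n ≤ k := by
    intro k n h
    by_contra hc
    push_neg at hc
    have h1 : S (k+1) ≤ S (kk n) := hSmono.monotone hc
    have h2 := hk1 n
    omega
  have hkkS : ∀ k, kk (S k) = k := fun k =>
    le_antisymm (hkk_le k (S k) (hSmono (Nat.lt_succ_self k))) (hkk_ge k (S k) le_rfl)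
  set v : ℕ → X := fun n => w (kk n) (n - S (kk n)) with hvdef
  have hvS : ∀ k, v (S k) = x k := by
    intro k
    show w (kk (S k)) (S k - S (kk (S k))) = x k
    rw [hkkS k, Nat.sub_self]
    exact hw0 k
  have hvsucc : ∀ n, v (n+1) = w (kk n) (n + 1 - S (kk n)) := by
    intro n
    rcases Nat.lt_or_ge (n+1) (S (kk n + 1)) with h | h
    · have he : kk (n+1) = kk n :=
        le_antisymm (hkk_le _ _ h) (hkk_ge _ _ (le_trans (hk1 n) (Nat.le_succ n)))
      show w (kk (n+1)) (n + 1 - S (kk (n+1))) = _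
      rw [he]
    · have he : n + 1 = S (kk n + 1) := by
        have := hk2 n; omega
      have h2 : n + 1 - S (kk n) = B (kk n) := by
        rw [he, hSs]; omega
      calc v (n+1) = x (kk n + 1) := by rw [he]; exact hvS (kk n + 1)
      _ = w (kk n) (B (kk n)) := (hwB _).symm
      _ = w (kk n) (n + 1 - S (kk n)) := by rw [h2]
  have hvstep : ∀ n, dist (v n) (v (n+1)) < 1/((kk n : ℝ)+1) := by
    intro n
    rw [hvsucc n]
    have h1 : S (kk n) ≤ n := hk1 n
    have h2 : n < S (kk n + 1) := hk2 n
    have h3 : n - S (kk n) < B (kk n) := by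
      rw [hSs] at h2; omega
    have h4 : n + 1 - S (kk n) = (n - S (kk n)) + 1 := by omega
    rw [h4]
    exact hwstep (kk n) _ h3
  refine ⟨v, S, hSmono, hvS, ?_, ?_⟩
  · intro k
    have h := hvsucc (S k)
    rw [hkkS k] at h
    have h2 : S k + 1 - S k = 1 := by omega
    rw [h, h2, hw1]
  · intro ε hε
    obtain ⟨K, hK⟩ := exists_eps_le hε
    refine ⟨S K, fun n hn => ?_⟩
    rw [dist_comm]
    exact lt_of_lt_of_le (hvstep n) (hK (kk n) (hkk_ge K n hn))

lemma key (u : ℕ → X) (hu : BourbakiQuasiCauchy u) (hno : ∀ c, ¬ MapClusterPt c atTop u) :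
    ∃ f : X → ℝ, Continuous f ∧ ¬ WardContinuous f := by
  classical
  have hch : ∀ k : ℕ, ∃ (p : X) (n₀ : ℕ), ∀ n ≥ n₀, ChainConn (1/((k:ℝ)+1)) p (u n) :=
    fun k => hu _ (eps_pos k)
  choose p N hN using hch
  obtain ⟨m, hmlt, hmN, hinj⟩ := exists_m hno N
  have hmm : StrictMono m := strictMono_nat_of_lt_succ hmlt
  have hm : ∀ k, k ≤ m k := fun k => hmm.le_apply
  set x : ℕ → X := fun k => u (m k) with hxdef
  have hinj' : Function.Injective x := hinj
  have hxchain : ∀ k : ℕ, ChainConn (1/((k:ℝ)+1)) (x k) (x (k+1)) := fun k =>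
    chainConn_trans (chainConn_symm (hN k (m k) (hmN k)))
      (hN k (m (k+1)) (le_trans (hmN k) (le_of_lt (hmlt k))))
  have hxne : ∀ k : ℕ, x k ≠ x (k+1) := fun k he => by
    have := hinj' he; omega
  have hzex : ∀ k : ℕ, ∃ zk, zk ≠ x k ∧ dist (x k) zk < 1/((k:ℝ)+1) ∧
      ChainConn (1/((k:ℝ)+1)) zk (x (k+1)) := fun k => chain_head' (hxchain k) (hxne k)
  choose z hz1 hz2 hz3 using hzex
  have hrex : ∀ j : ℕ, ∃ r, 0 < r ∧ r ≤ 1/((j:ℝ)+1) ∧ (∀ i, i ≠ j → r ≤ dist (x j) (x i)) ∧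
      (∀ k, z k ≠ x j → r ≤ dist (x j) (z k)) :=
    fun j => exists_radii hno m hm x z (fun k => rfl) hinj' hz2 j
  choose r hr0 hr1 hr2 hr3 using hrex
  refine ⟨ff x r, ?_, ?_⟩
  · apply ff_cont
    intro c
    obtain ⟨ε, hε, Nc, hNc⟩ := no_cluster_sep hno c
    obtain ⟨K2, hK2⟩ := exists_eps_le (show (0:ℝ) < ε/4 by linarith)
    refine ⟨ε/4, by linarith, max Nc K2, fun y hy j hj => ?_⟩
    by_contra hne
    have h1 : dist y (x j) < r j := fbump_ne x r (hr0 j) hne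
    have h2 : r j ≤ ε/4 := le_trans (hr1 j) (hK2 j (le_trans (le_max_right _ _) hj))
    have h3 : ε ≤ dist (x j) c := hNc (m j) (le_trans (le_trans (le_max_left _ _) hj) (hm j))
    have h4 : dist y c < ε/4 := mem_ball.mp hy
    have h5 := dist_triangle (x j) y c
    rw [dist_comm (x j) y] at h5
    linarith
  · intro hw
    obtain ⟨v, S, hSmono, hvS, hvS1, hqc⟩ := concat x z hz2 hz3
    obtain ⟨n₀, hn₀⟩ := hw v hqc 1 one_pos
    have hb := hn₀ (S n₀) hSmono.le_apply
    simp only [Function.comp_apply] at hb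
    rw [hvS1, hvS] at hb
    have hfx : ff x r (x n₀) = (n₀:ℝ)+1 := ff_eval_x x r hr0 hr2 n₀
    by_cases hcase : ∃ j, z n₀ = x j
    · obtain ⟨j, hj⟩ := hcase
      have hjne : j ≠ n₀ := fun he => hz1 n₀ (he ▸ hj)
      rw [hj, hfx, ff_eval_x x r hr0 hr2 j, Real.dist_eq] at hb
      have h6 : |(j:ℝ) - n₀| < 1 := by
        have he : ((j:ℝ)+1) - ((n₀:ℝ)+1) = (j:ℝ) - n₀ := by ring
        rwa [he] at hb
      obtain ⟨hl, hr'⟩ := abs_lt.mp h6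
      rcases lt_or_gt_of_ne hjne with h | h
      · have : (j:ℝ) + 1 ≤ n₀ := by exact_mod_cast h
        linarith
      · have : (n₀:ℝ) + 1 ≤ j := by exact_mod_cast h
        linarith
    · push_neg at hcase
      have hz0 : ff x r (z n₀) = 0 := ff_eval_notin x r (fun j =>
        fbump_zero x r (hr0 j) (by rw [dist_comm]; exact hr3 j n₀ (hcase j)))
      rw [hz0, hfx, Real.dist_eq, zero_sub, abs_neg, abs_of_nonneg (by positivity)] at hb
      have : (0:ℝ) ≤ n₀ := Nat.cast_nonneg _
      linarith

end Aux

theorem stmt12 {X : Type*} [MetricSpace X] :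
    List.TFAE [
      BourbakiQuasiComplete X,
      ∀ u : ℕ → X, QuasiCauchy u → ∀ φ : ℕ → ℕ, StrictMono φ →
        ∃ c : X, MapClusterPt c atTop (u ∘ φ),
      ∀ f : X → ℝ, Continuous f → WardContinuous f] := by
  tfae_have 1 → 2 := by
    intro h1 u hu φ hφ
    apply h1 (u ∘ φ)
    intro ε hε
    obtain ⟨n₀, hn₀⟩ := hu ε hε
    refine ⟨u n₀, n₀, fun n hn => ?_⟩
    refine ⟨φ n - n₀, fun i => u (n₀ + i), by simp, ?_, ?_⟩
    · have : n₀ + (φ n - n₀) = φ n := by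
        have h1 : n₀ ≤ n := hn
        have h2 : n ≤ φ n := hφ.le_apply
        omega
      simp only [this, Function.comp_apply]
    · intro i hi
      show dist (u (n₀ + i)) (u (n₀ + (i+1))) < ε
      have he : n₀ + (i + 1) = (n₀ + i) + 1 := by omega
      rw [he, dist_comm]
      exact hn₀ (n₀ + i) (by omega)
  tfae_have 2 → 3 := by
    intro h2 f hf u hu ε hε
    by_contra hc
    push_neg at hc
    have hex : ∀ b : ℕ, ∃ n, b ≤ n ∧ ε ≤ dist (f (u (n+1))) (f (u n)) := by
      intro b
      obtain ⟨n, hn, hn'⟩ := hc b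
      exact ⟨n, hn, hn'⟩
    choose nx hnx1 hnx2 using hex
    set ψ : ℕ → ℕ := fun k => Nat.rec (nx 0) (fun _ pk => nx (pk + 1)) k with hψdef
    have hψs : ∀ k, ψ (k+1) = nx (ψ k + 1) := fun k => rfl
    have hψmono : StrictMono ψ := strictMono_nat_of_lt_succ (fun k => by
      rw [hψs]
      have := hnx1 (ψ k + 1)
      omega)
    have hjump : ∀ k, ε ≤ dist (f (u (ψ k + 1))) (f (u (ψ k))) := by
      intro k
      cases k with
      | zero => exact hnx2 0
      | succ k => rw [hψs]; exact hnx2 (ψ k + 1)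
    obtain ⟨c, hcl⟩ := h2 u hu ψ hψmono
    have hcont : ContinuousAt f c := hf.continuousAt
    obtain ⟨δ, hδ, hδ'⟩ := Metric.continuousAt_iff.mp hcont (ε/2) (by linarith)
    obtain ⟨Nq, hNq⟩ := hu (δ/2) (by linarith)
    have hfreq := (mapClusterPt_iff_frequently.mp hcl (ball c (δ/2)) (ball_mem_nhds c (by linarith)))
    obtain ⟨k, hk, hkball⟩ := (frequently_atTop.mp hfreq) Nq
    have h1 : dist (u (ψ k)) c < δ/2 := mem_ball.mp hkball
    have h2' : dist (u (ψ k + 1)) (u (ψ k)) < δ/2 := hNq (ψ k) (le_trans hk hψmono.le_apply)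
    have h3 : dist (u (ψ k + 1)) c < δ := by
      have := dist_triangle (u (ψ k + 1)) (u (ψ k)) c
      linarith
    have h4 : dist (f (u (ψ k))) (f c) < ε/2 := hδ' (by linarith : dist (u (ψ k)) c < δ)
    have h5 : dist (f (u (ψ k + 1))) (f c) < ε/2 := hδ' h3
    have h6 := dist_triangle (f (u (ψ k + 1))) (f c) (f (u (ψ k)))
    rw [dist_comm (f c) (f (u (ψ k)))] at h6
    have := hjump k
    linarith
  tfae_have 3 → 1 := by
    intro h3 u hu
    by_contra hc
    push_neg at hc
    obtain ⟨f, hf, hwf⟩ := key u hu hc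
    exact hwf (h3 f hf)
  tfae_finish
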